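/- Let Φ : I → O be a quantum channel. Then the quantum confusability multigraph S̃_Φ ⊆ B(H_in) ⊗ O^op is an (I'⊗1)–(I'⊗1) bimodule (where I' is the commutant of I in B(H_in)), is self-adjoint, i.e. (S̃_Φ)* = S̃_Φ, and is closed under multiplication, i.e. (S̃_Φ)² ⊆ S̃_Φ. -/

import Mathlib

/-!
STATEMENT 9: Let `Φ : I → O` be a quantum channel.  Then the quantum confusability
multigraph `S̃_Φ ⊆ B(H_in) ⊗ O^op` is an `(I'⊗1)–(I'⊗1)` bimodule (`I'` the commutant
of `I` in `B(H_in)`), is self-adjoint (`(S̃_Φ)* = S̃_Φ`), and is closed under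
multiplication (`(S̃_Φ)² ⊆ S̃_Φ`).

Encoding: as in the companion files, `B(H_in) ⊗ O^op` acts faithfully on the module
`M_Φ = H_in ⊗ O^op` and `S̃_Φ` is realised there via the canonical Stinespring module
`(M_Φ, √C_Φ)`; `I' ⊗ 1` consists of the operators `A ⊗ₖ 1` with `A` commuting with the
block-diagonal representation of `I`.
-/

open scoped ComplexOrder Kronecker Matrix

namespace Stmt9

open scoped Classical

abbrev PiMat (ι : Type) (d : ι → Type) [∀ i, Fintype (d i)] : Type _ :=
  ∀ i, Matrix (d i) (d i) ℂ

def toBig {k d : Type} (X : Matrix k k (Matrix d d ℂ)) : Matrix (k × d) (k × d) ℂ :=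
  Matrix.of fun p q => X p.1 q.1 p.2 q.2

variable {ιa ιb : Type} [Fintype ιa] [DecidableEq ιa] [Fintype ιb] [DecidableEq ιb]
  {da : ιa → Type} [∀ a, Fintype (da a)] [∀ a, DecidableEq (da a)]
  {db : ιb → Type} [∀ b, Fintype (db b)] [∀ b, DecidableEq (db b)]

def eMat (a : ιa) (i j : da a) : PiMat ιa da :=
  Pi.single a (Matrix.single i j 1)

def IsCP (Φ : PiMat ιa da →ₗ[ℂ] PiMat ιb db) : Prop :=
  ∀ (n : ℕ) (X : Matrix (Fin n) (Fin n) (PiMat ιa da)),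
    (toBig (X.map (Matrix.blockDiagonal' (α := ℂ)))).PosSemidef →
    (toBig ((X.map ⇑Φ).map (Matrix.blockDiagonal' (α := ℂ)))).PosSemidef

noncomputable def trPi {ι : Type} [Fintype ι] {d : ι → Type} [∀ i, Fintype (d i)]
    (x : PiMat ι d) : ℂ :=
  ∑ i, (x i).trace

/-- Right multiplication by `y ∈ O^op` on the Hilbert–Schmidt space of `O`. -/
def RmatO (y : PiMat ιb db) :
    Matrix (Σ b, db b × db b) (Σ b, db b × db b) ℂ :=
  Matrix.blockDiagonal' fun b => Matrix.of fun pq pq' : db b × db b =>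
    if pq.1 = pq'.1 then y b pq'.2 pq.2 else 0

/-- Left multiplication by `y ∈ O` on the Hilbert–Schmidt space of `O`. -/
def LmatO (y : PiMat ιb db) :
    Matrix (Σ b, db b × db b) (Σ b, db b × db b) ℂ :=
  Matrix.blockDiagonal' fun b => Matrix.of fun pq pq' : db b × db b =>
    if pq.2 = pq'.2 then y b pq.1 pq'.1 else 0

/-- The right `O^op`-module action on `M_Φ = H_in ⊗ O^op`. -/
def actOMat (x : PiMat ιb db) :
    Matrix ((Σ a, da a) × Σ b, db b × db b) ((Σ a, da a) × Σ b, db b × db b) ℂ :=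
  (1 : Matrix (Σ a, da a) (Σ a, da a) ℂ) ⊗ₖ LmatO x

/-- The Choi-type invariant `C_Φ` as an operator on `M_Φ`. -/
noncomputable def CMat (Φ : PiMat ιa da →ₗ[ℂ] PiMat ιb db) :
    Matrix ((Σ a, da a) × Σ b, db b × db b) ((Σ a, da a) × Σ b, db b × db b) ℂ :=
  ∑ a : ιa, ∑ i : da a, ∑ j : da a,
    Matrix.single (⟨a, i⟩ : Σ a, da a) (⟨a, j⟩ : Σ a, da a) (1 : ℂ) ⊗ₖ
      RmatO (Φ (eMat a j i))

/-- Positive-semidefinite square root (and junk value `0` off the PSD cone). -/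
noncomputable def psqrt {n : Type} [Fintype n] [DecidableEq n] (A : Matrix n n ℂ) :
    Matrix n n ℂ :=
  if h : A.PosSemidef then
    (h.1.eigenvectorUnitary : Matrix n n ℂ) *
      Matrix.diagonal (((↑) : ℝ → ℂ) ∘ Real.sqrt ∘ h.1.eigenvalues) *
      (star h.1.eigenvectorUnitary : Matrix n n ℂ) else 0

/-- The quantum confusability multigraph `S̃_Φ = W* L(M_Φ) W ⊆ B(H_in) ⊗ O^op`, for the
canonical Stinespring module `(M_Φ, √C_Φ)`. -/
noncomputable def multigraph (Φ : PiMat ιa da →ₗ[ℂ] PiMat ιb db) :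
    Set (Matrix ((Σ a, da a) × Σ b, db b × db b) ((Σ a, da a) × Σ b, db b × db b) ℂ) :=
  {X | ∃ T, (∀ x : PiMat ιb db, T * actOMat (da := da) x = actOMat (da := da) x * T) ∧
        X = psqrt (CMat Φ) * T * psqrt (CMat Φ)}


/-- The commutant `I'` of `I` in `B(H_in)`. -/
def commI : Set (Matrix (Σ a, da a) (Σ a, da a) ℂ) :=
  {A | ∀ x : PiMat ιa da, A * Matrix.blockDiagonal' x = Matrix.blockDiagonal' x * A}

/-! ### Auxiliary lemmas -/

section SqrtCommute

variable {n : Type*} [Fintype n] [DecidableEq n]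

/-- Conjugation by a unitary matrix, as an algebra homomorphism. -/
noncomputable def conjAlgHom (U : Matrix.unitaryGroup n ℂ) :
    Matrix n n ℂ →ₐ[ℂ] Matrix n n ℂ where
  toFun X := U.1 * X * star U.1
  map_one' := by
    show U.1 * 1 * star U.1 = 1
    rw [mul_one]
    exact Matrix.mem_unitaryGroup_iff.mp U.2
  map_mul' X Y := by
    show U.1 * (X * Y) * star U.1 = (U.1 * X * star U.1) * (U.1 * Y * star U.1)
    have h : star U.1 * U.1 = 1 := Matrix.mem_unitaryGroup_iff'.mp U.2
    simp only [Matrix.mul_assoc]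
    rw [← Matrix.mul_assoc (star U.1) U.1, h, Matrix.one_mul]
  map_zero' := by show U.1 * 0 * star U.1 = 0; simp
  map_add' X Y := by
    show U.1 * (X + Y) * star U.1 = _
    simp [Matrix.mul_add, Matrix.add_mul]
  commutes' c := by
    show U.1 * (algebraMap ℂ (Matrix n n ℂ) c) * star U.1 = _
    rw [Algebra.algebraMap_eq_smul_one, Matrix.mul_smul, mul_one, Matrix.smul_mul,
      Matrix.mem_unitaryGroup_iff.mp U.2]

/-- Positive-semidefinite square root. -/
noncomputable def _root_.Matrix.PosSemidef.sqrt {A : Matrix n n ℂ} (hA : A.PosSemidef) :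
    Matrix n n ℂ :=
  (hA.1.eigenvectorUnitary : Matrix n n ℂ) *
    Matrix.diagonal (((↑) : ℝ → ℂ) ∘ Real.sqrt ∘ hA.1.eigenvalues) *
    (star hA.1.eigenvectorUnitary : Matrix n n ℂ)

lemma _root_.Matrix.PosSemidef.sqrt_mul_self {A : Matrix n n ℂ} (hA : A.PosSemidef) :
    hA.sqrt * hA.sqrt = A := by
  unfold Matrix.PosSemidef.sqrt
  have hU : (star hA.1.eigenvectorUnitary : Matrix n n ℂ) *
      (hA.1.eigenvectorUnitary : Matrix n n ℂ) = 1 := Unitary.coe_star_mul_self _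
  have hD : Matrix.diagonal (((↑) : ℝ → ℂ) ∘ Real.sqrt ∘ hA.1.eigenvalues) *
      Matrix.diagonal (((↑) : ℝ → ℂ) ∘ Real.sqrt ∘ hA.1.eigenvalues) =
      Matrix.diagonal (RCLike.ofReal ∘ hA.1.eigenvalues) := by
    rw [Matrix.diagonal_mul_diagonal]
    congr 1
    funext i
    simp only [Function.comp_apply]
    rw [← Complex.ofReal_mul, Real.mul_self_sqrt (hA.eigenvalues_nonneg i)]
    rfl
  conv_rhs => rw [hA.1.spectral_theorem, Unitary.conjStarAlgAut_apply, ← hD]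
  simp only [Matrix.mul_assoc]
  rw [← Matrix.mul_assoc (star (hA.1.eigenvectorUnitary : Matrix n n ℂ)), hU, Matrix.one_mul]

lemma _root_.Matrix.PosSemidef.posSemidef_sqrt {A : Matrix n n ℂ} (hA : A.PosSemidef) :
    hA.sqrt.PosSemidef := by
  have hd : (Matrix.diagonal (((↑) : ℝ → ℂ) ∘ Real.sqrt ∘ hA.1.eigenvalues)).PosSemidef :=
    Matrix.PosSemidef.diagonal fun i => by
      simp only [Function.comp_apply, Pi.zero_apply]
      exact_mod_cast Real.sqrt_nonneg _
  have := hd.mul_mul_conjTranspose_same (hA.1.eigenvectorUnitary : Matrix n n ℂ)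
  unfold Matrix.PosSemidef.sqrt
  rwa [← Matrix.star_eq_conjTranspose] at this

lemma aeval_diagonal (v : n → ℂ) (p : Polynomial ℂ) :
    Polynomial.aeval (Matrix.diagonal v) p = Matrix.diagonal fun i => p.eval (v i) := by
  have h1 : Polynomial.aeval (Matrix.diagonal v) p
      = (Matrix.diagonalAlgHom ℂ) (Polynomial.aeval v p) := by
    rw [← Polynomial.aeval_algHom_apply]
    rfl
  rw [h1]
  have h2 : Polynomial.aeval v p = fun i => p.eval (v i) := by
    funext i
    rw [show (Polynomial.aeval v p) i
        = (Pi.evalAlgHom ℂ (fun _ => ℂ) i) (Polynomial.aeval v p) from rfl,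
      ← Polynomial.aeval_algHom_apply]
    simp
  rw [h2]
  rfl

lemma sqrt_eq_aeval {A : Matrix n n ℂ} (hA : A.PosSemidef) :
    ∃ p : Polynomial ℂ, Polynomial.aeval A p = hA.sqrt := by
  classical
  set s : Finset ℂ := Finset.univ.image (fun i => (hA.1.eigenvalues i : ℂ)) with hs
  set p : Polynomial ℂ := Lagrange.interpolate s id (fun z => (Real.sqrt z.re : ℂ)) with hp
  refine ⟨p, ?_⟩
  have hinj : Set.InjOn id (s : Set ℂ) := fun x _ y _ h => h
  have heval : ∀ i : n,
      p.eval ((hA.1.eigenvalues i : ℂ)) = (Real.sqrt (hA.1.eigenvalues i) : ℂ) := by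
    intro i
    have hi : ((hA.1.eigenvalues i : ℂ)) ∈ s := Finset.mem_image_of_mem _ (Finset.mem_univ i)
    have := Lagrange.eval_interpolate_at_node (fun z => (Real.sqrt z.re : ℂ)) hinj hi
    simpa [hp] using this
  have key : Polynomial.aeval A p =
      (conjAlgHom hA.1.eigenvectorUnitary)
        (Polynomial.aeval (Matrix.diagonal (fun i => (hA.1.eigenvalues i : ℂ))) p) := by
    rw [← Polynomial.aeval_algHom_apply]
    congr 1
    conv_lhs => rw [hA.1.spectral_theorem]
    rfl
  rw [key, aeval_diagonal]
  simp only [heval]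
  rfl

lemma commute_aeval {A B : Matrix n n ℂ} (h : B * A = A * B) (p : Polynomial ℂ) :
    B * Polynomial.aeval A p = Polynomial.aeval A p * B := by
  have hc : Commute B A := h
  induction p using Polynomial.induction_on' with
  | add f g hf hg => simp only [map_add, Matrix.mul_add, Matrix.add_mul, hf, hg]
  | monomial k c =>
    rw [Polynomial.aeval_monomial]
    exact (((Algebra.commute_algebraMap_left c B).symm).mul_right (hc.pow_right k)).eq

/-- Anything commuting with a positive semidefinite matrix commutes with its square root. -/
lemma commute_sqrt {A B : Matrix n n ℂ} (hA : A.PosSemidef) (h : B * A = A * B) :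
    B * hA.sqrt = hA.sqrt * B := by
  obtain ⟨p, hp⟩ := sqrt_eq_aeval hA
  rw [← hp]
  exact commute_aeval h p

end SqrtCommute

section Helpers

lemma kron_conjTranspose {l m n p : Type} [Fintype m] [Fintype p]
    (A : Matrix l m ℂ) (B : Matrix n p ℂ) : (A ⊗ₖ B)ᴴ = Aᴴ ⊗ₖ Bᴴ := by
  ext ⟨a, b⟩ ⟨c, d⟩
  simp [Matrix.conjTranspose_apply, Matrix.kroneckerMap_apply, star_mul']

lemma LmatO_mul_RmatO (x y : PiMat ιb db) :
    LmatO x * RmatO y = RmatO y * LmatO x := by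
  unfold LmatO RmatO
  rw [← Matrix.blockDiagonal'_mul, ← Matrix.blockDiagonal'_mul]
  refine congrArg Matrix.blockDiagonal' (funext fun b => Matrix.ext fun pq pq' => ?_)
  obtain ⟨p, q⟩ := pq; obtain ⟨p', q'⟩ := pq'
  simp only [Matrix.mul_apply, Matrix.of_apply, Fintype.sum_prod_type, ite_mul, mul_ite,
    zero_mul, mul_zero]
  simp [Finset.sum_ite_eq, Finset.sum_ite_eq', mul_comm]

lemma CMat_mul_actO (Φ : PiMat ιa da →ₗ[ℂ] PiMat ιb db) (x : PiMat ιb db) :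
    CMat Φ * actOMat (da := da) x = actOMat (da := da) x * CMat Φ := by
  unfold CMat actOMat
  simp only [Finset.sum_mul, Finset.mul_sum, ← Matrix.mul_kronecker_mul, ← LmatO_mul_RmatO,
    one_mul, mul_one]

lemma blockDiagonal'_eMat (a : ιa) (i j : da a) :
    Matrix.blockDiagonal' (eMat (da := da) a i j)
      = Matrix.single (⟨a, i⟩ : Σ a, da a) (⟨a, j⟩ : Σ a, da a) (1 : ℂ) := by
  ext ⟨c, k⟩ ⟨c', l⟩
  simp only [Matrix.single, Matrix.of_apply]
  by_cases h1 : c = c'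
  · subst h1
    rw [Matrix.blockDiagonal'_apply_eq]
    by_cases h2 : c = a
    · subst h2
      simp [eMat, Matrix.single, Sigma.mk.inj_iff, eq_comm]
    · rw [show eMat a i j c = 0 from Pi.single_eq_of_ne h2 _]
      rw [if_neg]
      · simp
      rintro ⟨⟨rfl, -⟩, -⟩
      exact h2 rfl
  · rw [Matrix.blockDiagonal'_apply_ne _ _ _ h1]
    rw [if_neg]
    rintro ⟨⟨rfl, -⟩, ⟨rfl, -⟩⟩
    exact h1 rfl

lemma commI_mul_CMat {A : Matrix (Σ a, da a) (Σ a, da a) ℂ} (hA : A ∈ commI (da := da))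
    (Φ : PiMat ιa da →ₗ[ℂ] PiMat ιb db) :
    (A ⊗ₖ (1 : Matrix (Σ b, db b × db b) (Σ b, db b × db b) ℂ)) * CMat Φ
      = CMat Φ * (A ⊗ₖ (1 : Matrix (Σ b, db b × db b) (Σ b, db b × db b) ℂ)) := by
  have hstd : ∀ (a : ιa) (i j : da a),
      A * Matrix.single (⟨a, i⟩ : Σ a, da a) (⟨a, j⟩ : Σ a, da a) (1 : ℂ)
        = Matrix.single (⟨a, i⟩ : Σ a, da a) (⟨a, j⟩ : Σ a, da a) (1 : ℂ) * A := by
    intro a i j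
    rw [← blockDiagonal'_eMat]
    exact hA (eMat a i j)
  unfold CMat
  simp only [Finset.sum_mul, Finset.mul_sum, ← Matrix.mul_kronecker_mul, one_mul, mul_one, hstd]

lemma actO_conjTranspose (x : PiMat ιb db) :
    (actOMat (da := da) x)ᴴ = actOMat (da := da) (fun b : ιb => (x b)ᴴ) := by
  unfold actOMat LmatO
  rw [kron_conjTranspose, Matrix.conjTranspose_one, Matrix.blockDiagonal'_conjTranspose]
  refine congrArg (Matrix.kroneckerMap _ 1 ∘ Matrix.blockDiagonal')
    (funext fun b => Matrix.ext fun pq pq' => ?_)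
  obtain ⟨p, q⟩ := pq; obtain ⟨p', q'⟩ := pq'
  simp only [Matrix.conjTranspose_apply, Matrix.of_apply]
  by_cases h : q = q'
  · subst h; simp
  · simp [h, Ne.symm h]

lemma kron_one_comm_actO (A : Matrix (Σ a, da a) (Σ a, da a) ℂ) (x : PiMat ιb db) :
    (A ⊗ₖ (1 : Matrix (Σ b, db b × db b) (Σ b, db b × db b) ℂ)) * actOMat (da := da) x
      = actOMat (da := da) x * (A ⊗ₖ (1 : Matrix (Σ b, db b × db b) (Σ b, db b × db b) ℂ)) := by
  unfold actOMat
  rw [← Matrix.mul_kronecker_mul, ← Matrix.mul_kronecker_mul, one_mul, mul_one, mul_one, one_mul]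

end Helpers

section PSD

noncomputable def XMat :
    Matrix (Fin (Fintype.card (Σ a, da a))) (Fin (Fintype.card (Σ a, da a))) (PiMat ιa da) :=
  Matrix.of fun r s => fun c => Matrix.of fun k l =>
    if ((⟨c, k⟩ : Σ a, da a) = (Fintype.equivFin (Σ a, da a)).symm r
        ∧ (⟨c, l⟩ : Σ a, da a) = (Fintype.equivFin (Σ a, da a)).symm s) then (1:ℂ) else 0

noncomputable def AMat :
    Matrix ιa (Fin (Fintype.card (Σ a, da a)) × Σ a, da a) ℂ :=
  Matrix.of fun a0 ru =>
    if (ru.2 = (Fintype.equivFin (Σ a, da a)).symm ru.1 ∧ ru.2.1 = a0) then 1 else 0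

lemma XMat_psd :
    (toBig ((XMat (da := da)).map (Matrix.blockDiagonal' (α := ℂ)))).PosSemidef := by
  have h : toBig ((XMat (da := da)).map (Matrix.blockDiagonal' (α := ℂ)))
      = (AMat (da := da))ᴴ * AMat (da := da) := by
    refine Matrix.ext fun ru sv => ?_
    obtain ⟨r, u⟩ := ru; obtain ⟨s, v⟩ := sv
    simp only [toBig, Matrix.of_apply, Matrix.map_apply, Matrix.mul_apply,
      Matrix.conjTranspose_apply, AMat]
    obtain ⟨c, k⟩ := u; obtain ⟨c', l⟩ := v
    by_cases hcc : c = c'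
    · subst hcc
      rw [Matrix.blockDiagonal'_apply_eq]
      simp only [XMat, Matrix.of_apply]
      rw [Finset.sum_eq_single c]
      · simp only [and_true]
        simp only [apply_ite (star : ℂ → ℂ), star_one, star_zero, ite_mul, mul_ite, one_mul,
          mul_one, zero_mul, mul_zero, ite_and]
        split_ifs <;> rfl
      · intro a0 _ ha0
        simp [Ne.symm ha0]
      · simp
    · rw [Matrix.blockDiagonal'_apply_ne _ _ _ hcc]
      symm
      apply Finset.sum_eq_zero
      intro a0 _
      by_cases h1 : c = a0
      · subst h1
        simp [Ne.symm hcc]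
      · simp [h1]
  rw [h]
  exact Matrix.posSemidef_conjTranspose_mul_self _

lemma XMat_eq (a : ιa) (i j : da a) :
    XMat (da := da) (Fintype.equivFin (Σ a, da a) ⟨a, j⟩) (Fintype.equivFin (Σ a, da a) ⟨a, i⟩)
      = eMat a j i := by
  funext c
  refine Matrix.ext fun k l => ?_
  simp only [XMat, Matrix.of_apply, Equiv.symm_apply_apply]
  by_cases hc : c = a
  · subst hc
    simp [eMat, Matrix.single, Sigma.mk.inj_iff, heq_eq_eq, Pi.single_eq_same, eq_comm]
  · rw [if_neg, show eMat a j i c = 0 from Pi.single_eq_of_ne hc _]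
    · simp
    rintro ⟨⟨rfl, -⟩, -⟩
    exact hc rfl

lemma XMat_ne (a a' : ιa) (i : da a) (j : da a') (h : a' ≠ a) :
    XMat (da := da) (Fintype.equivFin (Σ a, da a) ⟨a', j⟩) (Fintype.equivFin (Σ a, da a) ⟨a, i⟩)
      = 0 := by
  funext c
  refine Matrix.ext fun k l => ?_
  simp only [XMat, Matrix.of_apply, Equiv.symm_apply_apply]
  rw [if_neg]
  · simp
  rintro ⟨h1, h2⟩
  exact h ((congrArg Sigma.fst h1).symm.trans (congrArg Sigma.fst h2))

noncomputable def EMat (w : Σ b, db b) :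
    Matrix (Fin (Fintype.card (Σ a, da a)) × Σ b, db b) ((Σ a, da a) × Σ b, db b × db b) ℂ :=
  Matrix.of fun x y =>
    (if x = (Fintype.equivFin (Σ a, da a) y.1, (⟨y.2.1, y.2.2.2⟩ : Σ b, db b)) then 1 else 0) *
    (if (⟨y.2.1, y.2.2.1⟩ : Σ b, db b) = w then 1 else 0)

lemma EconjE
    (M : Matrix (Fin (Fintype.card (Σ a, da a)) × Σ b, db b)
      (Fin (Fintype.card (Σ a, da a)) × Σ b, db b) ℂ)
    (w : Σ b, db b) (y y' : (Σ a, da a) × Σ b, db b × db b) :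
    ((EMat (da := da) w)ᴴ * M * EMat (da := da) w) y y' =
      (if (⟨y.2.1, y.2.2.1⟩ : Σ b, db b) = w then 1 else 0) *
      ((if (⟨y'.2.1, y'.2.2.1⟩ : Σ b, db b) = w then 1 else 0) *
      M (Fintype.equivFin (Σ a, da a) y.1, ⟨y.2.1, y.2.2.2⟩)
        (Fintype.equivFin (Σ a, da a) y'.1, ⟨y'.2.1, y'.2.2.2⟩)) := by
  simp only [Matrix.mul_apply, Matrix.conjTranspose_apply, EMat, Matrix.of_apply, star_mul',
    apply_ite (star : ℂ → ℂ), star_one, star_zero, ite_mul, mul_ite, one_mul, mul_one,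
    zero_mul, mul_zero, Finset.sum_ite_eq, Finset.sum_ite_eq', Finset.mem_univ, if_true,
    Finset.sum_const_zero]
  split_ifs <;> simp [Finset.sum_ite_eq']

lemma sum_collapse_eq (a : ιa) (i j : da a) (F : ∀ a0 : ιa, da a0 → da a0 → ℂ) :
    (∑ a0 : ιa, ∑ i0 : da a0, ∑ j0 : da a0,
      if ((⟨a0, i0⟩ : Σ a, da a) = ⟨a, i⟩ ∧ (⟨a0, j0⟩ : Σ a, da a) = ⟨a, j⟩)
        then F a0 i0 j0 else 0) = F a i j := by
  rw [Finset.sum_eq_single a]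
  · simp only [Sigma.mk.inj_iff, heq_eq_eq, true_and, ite_and]
    simp [Finset.sum_ite_eq', Finset.mem_univ]
  · intro a0 _ ha0
    apply Finset.sum_eq_zero; intro i0 _
    apply Finset.sum_eq_zero; intro j0 _
    simp [Sigma.mk.inj_iff, ha0]
  · simp

lemma sum_collapse_ne (u v : Σ a, da a) (huv : u.1 ≠ v.1) (F : ∀ a0 : ιa, da a0 → da a0 → ℂ) :
    (∑ a0 : ιa, ∑ i0 : da a0, ∑ j0 : da a0,
      if ((⟨a0, i0⟩ : Σ a, da a) = u ∧ (⟨a0, j0⟩ : Σ a, da a) = v)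
        then F a0 i0 j0 else 0) = 0 := by
  apply Finset.sum_eq_zero; intro a0 _
  apply Finset.sum_eq_zero; intro i0 _
  apply Finset.sum_eq_zero; intro j0 _
  rw [if_neg]
  rintro ⟨rfl, rfl⟩
  exact huv rfl

lemma CMat_eq_sum (Φ : PiMat ιa da →ₗ[ℂ] PiMat ιb db) :
    CMat Φ = ∑ w : Σ b, db b,
      (EMat (da := da) w)ᴴ *
        (toBig (((XMat (da := da)).map ⇑Φ).map (Matrix.blockDiagonal' (α := ℂ))))ᵀ *
        EMat (da := da) w := by
  refine Matrix.ext fun y y' => ?_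
  rw [Matrix.sum_apply]
  simp only [EconjE]
  simp only [ite_mul, one_mul, zero_mul, Finset.sum_ite_eq, Finset.mem_univ, if_true]
  obtain ⟨⟨a, i⟩, ⟨b, p, q⟩⟩ := y
  obtain ⟨⟨a', j⟩, ⟨b', p', q'⟩⟩ := y'
  simp only [Matrix.transpose_apply, toBig, Matrix.of_apply, Matrix.map_apply]
  simp only [CMat, Matrix.sum_apply, Matrix.kroneckerMap_apply, Matrix.single,
    Matrix.of_apply, ite_mul, one_mul, zero_mul]
  by_cases haa : a' = a
  · subst haa
    rw [sum_collapse_eq _ i j (fun a0 j0 i0 => RmatO (Φ (eMat a0 i0 j0)) ⟨b, (p, q)⟩ ⟨b', (p', q')⟩)]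
    by_cases hbb : b' = b
    · subst hbb
      rw [XMat_eq]
      simp only [RmatO, Matrix.blockDiagonal'_apply_eq, Matrix.of_apply]
      by_cases hpp : p' = p
      · subst hpp
        simp
      · simp [Sigma.mk.inj_iff, hpp, Ne.symm hpp]
    · rw [XMat_eq]
      simp only [RmatO]
      rw [Matrix.blockDiagonal'_apply_ne _ _ _ (fun h => hbb h.symm), if_neg]
      rintro ⟨rfl, -⟩
      exact hbb rfl
  · rw [sum_collapse_ne (⟨a, i⟩ : Σ a, da a) (⟨a', j⟩ : Σ a, da a)
      (fun h => haa h.symm) (fun a0 j0 i0 => RmatO (Φ (eMat a0 i0 j0)) ⟨b, (p, q)⟩ ⟨b', (p', q')⟩),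
      XMat_ne a a' i j haa]
    simp

lemma CMat_psd (Φ : PiMat ιa da →ₗ[ℂ] PiMat ιb db) (hCP : IsCP Φ) :
    (CMat Φ).PosSemidef := by
  have hD := hCP _ (XMat (da := da)) (XMat_psd)
  have hDt := hD.transpose
  rw [CMat_eq_sum Φ]
  refine Finset.sum_induction _ _ (fun A B hA hB => hA.add hB) Matrix.PosSemidef.zero ?_
  intro w _
  exact hDt.conjTranspose_mul_mul_same _

end PSD

theorem stmt9
    (Φ : PiMat ιa da →ₗ[ℂ] PiMat ιb db) (hCP : IsCP Φ)
    (hTP : ∀ x : PiMat ιa da, trPi (Φ x) = trPi x) :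
    (∀ A ∈ commI (da := da), ∀ S ∈ multigraph Φ,
        (A ⊗ₖ (1 : Matrix (Σ b, db b × db b) (Σ b, db b × db b) ℂ)) * S ∈ multigraph Φ ∧
        S * (A ⊗ₖ (1 : Matrix (Σ b, db b × db b) (Σ b, db b × db b) ℂ)) ∈ multigraph Φ) ∧
    ((fun X => Xᴴ) '' multigraph Φ = multigraph Φ) ∧
    (∀ S ∈ multigraph Φ, ∀ T ∈ multigraph Φ, S * T ∈ multigraph Φ) := by
  have hC : (CMat Φ).PosSemidef := CMat_psd Φ hCP
  have hps : psqrt (CMat Φ) = hC.sqrt := dif_pos hC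
  set R := hC.sqrt with hRdef
  have hRR : R * R = CMat Φ := hC.sqrt_mul_self
  have hRH : Rᴴ = R := hC.posSemidef_sqrt.1
  have closure_star : ∀ S ∈ multigraph Φ, Sᴴ ∈ multigraph Φ := by
    rintro S ⟨T, hT, rfl⟩
    refine ⟨Tᴴ, ?_, ?_⟩
    · intro x
      have h1 : actOMat (da := da) x = (actOMat (da := da) (fun b : ιb => (x b)ᴴ))ᴴ := by
        rw [actO_conjTranspose]
        exact congrArg (actOMat (da := da))
          (funext fun b => (Matrix.conjTranspose_conjTranspose (x b)).symm)
      rw [h1, ← Matrix.conjTranspose_mul, ← Matrix.conjTranspose_mul, hT]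
    · rw [hps, Matrix.conjTranspose_mul, Matrix.conjTranspose_mul, hRH, ← mul_assoc]
  refine ⟨?_, ?_, ?_⟩
  · intro A hA S hS
    obtain ⟨T, hT, rfl⟩ := hS
    have hAR : (A ⊗ₖ (1 : Matrix (Σ b, db b × db b) (Σ b, db b × db b) ℂ)) * R
        = R * (A ⊗ₖ (1 : Matrix (Σ b, db b × db b) (Σ b, db b × db b) ℂ)) :=
      commute_sqrt hC (commI_mul_CMat hA Φ)
    constructor
    · refine ⟨(A ⊗ₖ (1 : Matrix (Σ b, db b × db b) (Σ b, db b × db b) ℂ)) * T,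
        fun x => ?_, ?_⟩
      · rw [mul_assoc, hT x, ← mul_assoc, kron_one_comm_actO A x, mul_assoc]
      · rw [hps]
        simp only [← mul_assoc]
        rw [hAR]
    · refine ⟨T * (A ⊗ₖ (1 : Matrix (Σ b, db b × db b) (Σ b, db b × db b) ℂ)),
        fun x => ?_, ?_⟩
      · rw [mul_assoc, kron_one_comm_actO A x, ← mul_assoc, hT x, mul_assoc]
      · rw [hps, mul_assoc (R * T) R, ← hAR, ← mul_assoc, ← mul_assoc]
  · ext X
    constructor
    · rintro ⟨S, hS, rfl⟩
      exact closure_star S hS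
    · intro hX
      exact ⟨Xᴴ, closure_star X hX, Matrix.conjTranspose_conjTranspose X⟩
  · rintro S ⟨T, hT, rfl⟩ S' ⟨T', hT', rfl⟩
    refine ⟨T * CMat Φ * T', fun x => ?_, ?_⟩
    · simp only [mul_assoc]
      rw [hT' x, ← mul_assoc (CMat Φ), CMat_mul_actO,
        mul_assoc (actOMat (da := da) x) (CMat Φ) T', ← mul_assoc T (actOMat (da := da) x),
        hT x, mul_assoc (actOMat (da := da) x) T]
    · rw [hps]
      simp only [← mul_assoc]
      rw [mul_assoc (R * T) R R, hRR]


end Stmt9
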